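/- arXiv:2502.19744 — 2 statements merged into one kernel-verified Lean document; each statement's English description precedes it below -/
import Mathlib

section
/- The HWSD mechanism is hospital-strategyproof for binary capped additive valuations: suppose all hospitals have binary capped additive valuations and doctors have strict complete preference orders, and let X be the HWSD-optimal allocation for the true profile. For any hospital h and any binary capped additive valuation v', let Y be the HWSD-optimal allocation for the profile in which v_h is replaced by v' (all else unchanged). Then v_h(Y_h) ≤ v_h(X_h). -/
open Finset

/-- A matroid rank function on subsets of a finite ground set. -/
def IsMRF {α : Type*} [DecidableEq α] (v : Finset α → ℤ) : Prop :=
  v ∅ = 0 ∧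
  (∀ (S : Finset α) (d : α), d ∉ S →
    v (insert d S) - v S = 0 ∨ v (insert d S) - v S = 1) ∧
  (∀ (S T : Finset α) (d : α), S ⊆ T → d ∉ T →
    v (insert d T) - v T ≤ v (insert d S) - v S)

/-- The bundle of doctors assigned to hospital `h` under allocation `X`. -/
def bundle {n m : ℕ} (X : Fin m → Option (Fin n)) (h : Fin n) : Finset (Fin m) :=
  Finset.univ.filter (fun d => X d = some h)

/-- An allocation is non-redundant if every hospital's bundle is independent. -/
def NonRedundant {n m : ℕ} (v : Fin n → Finset (Fin m) → ℤ)
    (X : Fin m → Option (Fin n)) : Prop :=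
  ∀ h, v h (bundle X h) = (bundle X h).card

/-- Hospital utilitarian welfare. -/
def USW {n m : ℕ} (v : Fin n → Finset (Fin m) → ℤ) (X : Fin m → Option (Fin n)) : ℤ :=
  ∑ h, v h (bundle X h)

/-- Doctor `d` strictly prefers the first outcome to the second; every hospital is
strictly preferred to being unallocated (`none`). -/
def OptStrictPref {n m : ℕ} (P : Fin m → Fin n → Fin n → Prop) (d : Fin m) :
    Option (Fin n) → Option (Fin n) → Prop
  | some h, some h' => P d h h'
  | some _, none => True
  | none, _ => False

/-- `(h, S)` is a blocking pair for `X`. -/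
def IsBlockingPair {n m : ℕ} (v : Fin n → Finset (Fin m) → ℤ)
    (P : Fin m → Fin n → Fin n → Prop) (X : Fin m → Option (Fin n))
    (h : Fin n) (S : Finset (Fin m)) : Prop :=
  v h S = S.card ∧ v h (bundle X h) < v h S ∧
    ∀ d ∈ S, X d = some h ∨ OptStrictPref P d (some h) (X d)

/-- An allocation is stable if it is non-redundant and admits no blocking pair. -/
def Stable {n m : ℕ} (v : Fin n → Finset (Fin m) → ℤ)
    (P : Fin m → Fin n → Fin n → Prop) (X : Fin m → Option (Fin n)) : Prop :=
  NonRedundant v X ∧ ¬ ∃ h S, IsBlockingPair v P X h S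

/-- The HWSD ordering on non-redundant allocations: `X` beats `Y`. -/
def HWSDgt {n m : ℕ} (v : Fin n → Finset (Fin m) → ℤ)
    (P : Fin m → Fin n → Fin n → Prop) (X Y : Fin m → Option (Fin n)) : Prop :=
  USW v Y < USW v X ∨
  (USW v X = USW v Y ∧ ∃ j : Fin m,
    OptStrictPref P j (X j) (Y j) ∧ ∀ k : Fin m, k < j → X k = Y k)

/-- `X` is the HWSD-optimal allocation: the greatest non-redundant allocation in the
HWSD ordering (the output of the High Welfare Serial Dictatorship mechanism). -/
def IsHWSDOpt {n m : ℕ} (v : Fin n → Finset (Fin m) → ℤ)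
    (P : Fin m → Fin n → Fin n → Prop) (X : Fin m → Option (Fin n)) : Prop :=
  NonRedundant v X ∧ ∀ Y, NonRedundant v Y → Y ≠ X → HWSDgt v P X Y

/-- A binary capped additive valuation. -/
def IsBinaryCappedAdditive {α : Type*} (v : Finset α → ℤ) : Prop :=
  ∃ (b : ℕ) (w : α → ℤ), 0 < b ∧ (∀ d, w d = 0 ∨ w d = 1) ∧
    ∀ S : Finset α, v S = min (b : ℤ) (∑ d ∈ S, w d)

/-!
Suppose hospital `h` gains by misreporting, so that `h` has spare capacity in `X` while `Y`
gives `h` more doctors it truly wants outside `X h` than `X h` has outside `Y h`. View every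
doctor `d` with `X d ≠ Y d` as an arc from `Y d` to `X d` and walk along fresh arcs starting
from `h`, leaving `h` only along doctors it truly wants. If the current open segment of the walk
ends at an unallocated doctor, swapping it into `X` gives a feasible allocation of higher
welfare. If it ends at a hospital with spare capacity in `Y`, swapping the segment into `X` and
out of `Y` gives feasible allocations of equal welfare, and the first doctor of the segment
would have to prefer each of its two hospitals to the other. Otherwise every hospital reached is
full in `Y`, hence has at least as many arcs out as in, and when the walk returns to `h` the
surplus of wanted doctors leaves a fresh arc out of `h`; so the walk could go on forever.
-/

section Valuations

variable {α : Type*} [DecidableEq α]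

lemma exists_mem_notMem_of_card_inter_lt {S T U : Finset α} (hST : S ⊆ T)
    (hlt : #(T ∩ U) < #S) : ∃ d ∈ S, d ∉ U := by
  have hsub : U ∩ S ⊆ T ∩ U := fun d hd => mem_inter.2 ⟨hST (mem_inter.1 hd).2, (mem_inter.1 hd).1⟩
  obtain ⟨d, hdS, hdU⟩ := exists_mem_notMem_of_card_lt_card ((card_le_card hsub).trans_lt hlt)
  exact ⟨d, hdS, fun h => hdU (mem_inter.2 ⟨h, hdS⟩)⟩

lemma IsBinaryCappedAdditive.exists_eq_min_card_inter [Fintype α] {v : Finset α → ℤ}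
    (hv : IsBinaryCappedAdditive v) :
    ∃ (b : ℕ) (A : Finset α), ∀ S, v S = min (b : ℤ) #(S ∩ A) := by
  obtain ⟨b, w, -, hw, hvS⟩ := hv
  refine ⟨b, ({d | w d = 1} : Finset α), fun S => ?_⟩
  rw [hvS, ← sum_filter_add_sum_filter_not S (w · = 1),
    sum_congr rfl fun d hd => (mem_filter.1 hd).2,
    sum_eq_zero fun d hd => (hw d).resolve_right (mem_filter.1 hd).2, ← filter_mem_eq_inter]
  simp

lemma min_card_inter_eq_card_iff {b : ℕ} {A S : Finset α} :
    min (b : ℤ) #(S ∩ A) = #S ↔ S ⊆ A ∧ #S ≤ b := by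
  have hle : #(S ∩ A) ≤ #S := card_le_card inter_subset_left
  constructor
  · intro h
    have hcard : #S ≤ #(S ∩ A) := by omega
    exact ⟨inter_eq_left.1 (eq_of_subset_of_card_le inter_subset_left hcard), by omega⟩
  · rintro ⟨hSA, hb⟩
    rw [inter_eq_left.2 hSA]
    omega

end Valuations

section Allocations

variable {n m : ℕ} {P : Fin m → Fin n → Fin n → Prop} {v u : Fin n → Finset (Fin m) → ℤ}
  {X Y Z : Fin m → Option (Fin n)} {F : Finset (Fin m)}

@[simp]
lemma mem_bundle {g : Fin n} {d : Fin m} : d ∈ bundle X g ↔ X d = some g := by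
  simp [bundle]

lemma bundle_piecewise (g : Fin n) :
    bundle (F.piecewise Y X) g = bundle X g \ F ∪ bundle Y g ∩ F := by
  ext d
  by_cases hd : d ∈ F <;> simp [hd]

lemma card_bundle_piecewise (g : Fin n) :
    #(bundle (F.piecewise Y X) g) + #(bundle X g ∩ F) = #(bundle X g) + #(bundle Y g ∩ F) := by
  have hdisj : Disjoint (bundle X g \ F) (bundle Y g ∩ F) :=
    disjoint_left.2 fun d hd hd' => (mem_sdiff.1 hd).2 (mem_inter.1 hd').2
  rw [bundle_piecewise, card_union_of_disjoint hdisj, ← card_sdiff_add_card_inter (bundle X g) F]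
  omega

lemma card_bundle_inter_insert {d : Fin m} (hd : d ∉ F) (g : Fin n) :
    #(bundle Z g ∩ insert d F) = #(bundle Z g ∩ F) + if Z d = some g then 1 else 0 := by
  by_cases hZd : Z d = some g
  · rw [inter_insert_of_mem (mem_bundle.2 hZd),
      card_insert_of_notMem fun h => hd (mem_inter.1 h).2, if_pos hZd]
  · rw [inter_insert_of_notMem (mt mem_bundle.1 hZd), if_neg hZd, add_zero]

lemma card_bundle_inter_le_card_sdiff (hF : ∀ d ∈ F, X d ≠ Y d) (g : Fin n) :
    #(bundle X g ∩ F) ≤ #(bundle X g \ bundle Y g) := by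
  refine card_le_card fun d hd => ?_
  obtain ⟨hdX, hdF⟩ := mem_inter.1 hd
  rw [mem_bundle] at hdX
  exact mem_sdiff.2 ⟨mem_bundle.2 hdX, fun hdY => hF d hdF (hdX.trans (mem_bundle.1 hdY).symm)⟩

lemma NonRedundant.usw_eq (hZ : NonRedundant v Z) : USW v Z = ((∑ g, #(bundle Z g) : ℕ) : ℤ) := by
  rw [USW, Nat.cast_sum]
  exact sum_congr rfl fun g _ => hZ g

lemma OptStrictPref.asymm {d : Fin m} [Std.Asymm (P d)] {a b : Option (Fin n)}
    (hab : OptStrictPref P d a b) : ¬ OptStrictPref P d b a := by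
  cases a <;> cases b <;> simp_all [OptStrictPref]
  exact _root_.asymm hab

lemma OptStrictPref.ne {d : Fin m} [Std.Asymm (P d)] {a b : Option (Fin n)}
    (hab : OptStrictPref P d a b) : a ≠ b := by
  rintro rfl
  exact hab.asymm hab

lemma IsHWSDOpt.usw_le (hX : IsHWSDOpt v P X) (hZ : NonRedundant v Z) : USW v Z ≤ USW v X := by
  by_cases hZX : Z = X
  · rw [hZX]
  · rcases hX.2 Z hZ hZX with hlt | ⟨heq, -⟩ <;> omega

lemma IsHWSDOpt.exists_first_pref (hX : IsHWSDOpt v P X) (hZ : NonRedundant v Z) (hZX : Z ≠ X)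
    (hle : USW v X ≤ USW v Z) : ∃ j, OptStrictPref P j (X j) (Z j) ∧ ∀ k < j, X k = Z k := by
  rcases hX.2 Z hZ hZX with hlt | ⟨-, hj⟩
  · omega
  · exact hj

theorem IsHWSDOpt.false_of_exchange [∀ d, Std.Asymm (P d)] (hX : IsHWSDOpt v P X)
    (hY : IsHWSDOpt u P Y) (hF : ∃ d ∈ F, X d ≠ Y d)
    (hZ : NonRedundant v (F.piecewise Y X)) (hW : NonRedundant u (F.piecewise X Y))
    (hUZ : USW v X ≤ USW v (F.piecewise Y X)) (hUW : USW u Y ≤ USW u (F.piecewise X Y)) :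
    False := by
  obtain ⟨d, hdF, hd⟩ := hF
  have hZX : F.piecewise Y X ≠ X := fun h =>
    hd ((congrFun h d).symm.trans (piecewise_eq_of_mem _ _ _ hdF))
  have hWY : F.piecewise X Y ≠ Y := fun h =>
    hd ((piecewise_eq_of_mem _ _ _ hdF).symm.trans (congrFun h d))
  obtain ⟨i, hi, hiX⟩ := hX.exists_first_pref hZ hZX hUZ
  obtain ⟨j, hj, hjY⟩ := hY.exists_first_pref hW hWY hUW
  have hiF : i ∈ F := by
    by_contra hiF
    exact hi.ne (piecewise_eq_of_notMem _ _ _ hiF).symm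
  have hjF : j ∈ F := by
    by_contra hjF
    exact hj.ne (piecewise_eq_of_notMem _ _ _ hjF).symm
  rw [piecewise_eq_of_mem _ _ _ hiF] at hi
  rw [piecewise_eq_of_mem _ _ _ hjF] at hj
  rcases lt_trichotomy i j with hij | rfl | hji
  · exact hi.ne ((hjY i hij).trans (piecewise_eq_of_mem _ _ _ hiF)).symm
  · exact hi.asymm hj
  · exact hj.ne ((hiX j hji).trans (piecewise_eq_of_mem _ _ _ hjF)).symm

end Allocations

section Flows

variable {n m : ℕ} {X Y : Fin m → Option (Fin n)} {F : Finset (Fin m)} {s t : Option (Fin n)}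

/-- Each doctor `d ∈ F` is an arc from `Y d` to `X d`, and `F` carries one unit of flow from `s`
to `t`; an endpoint `none` stands for an unallocated doctor. -/
def IsFlow (X Y : Fin m → Option (Fin n)) (F : Finset (Fin m)) (s t : Option (Fin n)) : Prop :=
  ∀ g, #(bundle Y g ∩ F) + (if t = some g then 1 else 0) =
    #(bundle X g ∩ F) + (if s = some g then 1 else 0)

lemma IsFlow.symm (hF : IsFlow X Y F s t) : IsFlow Y X F t s := fun g => (hF g).symm

lemma isFlow_empty : IsFlow X Y ∅ s s := fun g => by simp

lemma IsFlow.insert {c : Fin n} {d : Fin m} (hF : IsFlow X Y F s (some c)) (hd : d ∉ F)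
    (hYd : Y d = some c) : IsFlow X Y (insert d F) s (X d) := by
  intro g
  have hFg := hF g
  rw [card_bundle_inter_insert hd, card_bundle_inter_insert hd, hYd]
  split_ifs at hFg ⊢ <;> omega

lemma IsFlow.sum_card_piecewise (hF : IsFlow X Y F s t) :
    ∑ g, #(bundle (F.piecewise Y X) g) + ∑ g, (if t = some g then 1 else 0) =
      ∑ g, #(bundle X g) + ∑ g, (if s = some g then 1 else 0) := by
  rw [← sum_add_distrib, ← sum_add_distrib]
  refine sum_congr rfl fun g _ => ?_
  have := card_bundle_piecewise (F := F) (X := X) (Y := Y) g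
  have := hF g
  omega

end Flows

section Capped

variable {n m : ℕ} {b : Fin n → ℕ} {A : Fin n → Finset (Fin m)}
  {X Y Z : Fin m → Option (Fin n)} {F : Finset (Fin m)} {s t : Option (Fin n)}

def cappedProfile (b : Fin n → ℕ) (A : Fin n → Finset (Fin m)) : Fin n → Finset (Fin m) → ℤ :=
  fun g S => min (b g : ℤ) #(S ∩ A g)

lemma nonRedundant_cappedProfile_iff :
    NonRedundant (cappedProfile b A) Z ↔ ∀ g, bundle Z g ⊆ A g ∧ #(bundle Z g) ≤ b g :=
  forall_congr' fun _ => min_card_inter_eq_card_iff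

lemma IsFlow.nonRedundant_piecewise (hF : IsFlow X Y F s t)
    (hX : NonRedundant (cappedProfile b A) X) (hYA : ∀ g, bundle Y g ∩ F ⊆ A g)
    (hs : ∀ g, s = some g → #(bundle X g) < b g) :
    NonRedundant (cappedProfile b A) (F.piecewise Y X) := by
  rw [nonRedundant_cappedProfile_iff] at hX ⊢
  intro g
  refine ⟨bundle_piecewise (F := F) g ▸ union_subset (sdiff_subset.trans (hX g).1) (hYA g), ?_⟩
  have hcard := card_bundle_piecewise (F := F) (X := X) (Y := Y) g
  have hFg := hF g
  have hXg := (hX g).2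
  by_cases hsg : s = some g
  · have := hs g hsg
    split_ifs at hFg <;> omega
  · split_ifs at hFg <;> omega

end Capped

section Trails

variable {n m : ℕ} {P : Fin m → Fin n → Fin n → Prop} {X Y : Fin m → Option (Fin n)}
  {h : Fin n} {Ah : Finset (Fin m)} {b b₂ : Fin n → ℕ} {A A₂ : Fin n → Finset (Fin m)}
  {U E : Finset (Fin m)} {c : Option (Fin n)}

/-- `U` is the set of arcs walked so far from `h`, a union of closed walks through `h` and the
open segment `E` ending at `c`. The segment never enters `h` and leaves `h` only along doctors in
`Ah`, so that it can be swapped into `X` and out of `Y`. -/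
structure IsTrail (X Y : Fin m → Option (Fin n)) (h : Fin n) (Ah U E : Finset (Fin m))
    (c : Option (Fin n)) : Prop where
  subset : E ⊆ U
  ne : ∀ d ∈ U, X d ≠ Y d
  disjoint : Disjoint (bundle X h) E
  pool : bundle Y h ∩ E ⊆ Ah
  flow_used : IsFlow X Y U (some h) c
  flow : IsFlow X Y E (some h) c

lemma isTrail_empty : IsTrail X Y h Ah ∅ ∅ (some h) :=
  ⟨subset_rfl, by simp, by simp, by simp, isFlow_empty, isFlow_empty⟩

lemma IsTrail.extend {c : Fin n} {d : Fin m} (T : IsTrail X Y h Ah U E (some c)) (hdU : d ∉ U)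
    (hYd : Y d = some c) (hne : X d ≠ Y d) (hdA : c = h → d ∈ Ah) :
    ∃ E', IsTrail X Y h Ah (insert d U) E' (X d) := by
  have hne' : ∀ x ∈ insert d U, X x ≠ Y x := fun x hx =>
    (mem_insert.1 hx).elim (fun hx => hx ▸ hne) (T.ne x)
  have hflow_used := T.flow_used.insert hdU hYd
  by_cases hXd : X d = some h
  · exact ⟨∅, empty_subset _, hne', by simp, by simp, hflow_used, hXd ▸ isFlow_empty⟩
  have hdE : d ∉ E := fun hd => hdU (T.subset hd)
  have hpool : bundle Y h ∩ insert d E ⊆ Ah := by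
    by_cases hYdh : Y d = some h
    · rw [inter_insert_of_mem (mem_bundle.2 hYdh)]
      exact insert_subset (hdA (Option.some.inj (hYd.symm.trans hYdh))) T.pool
    · rw [inter_insert_of_notMem (mt mem_bundle.1 hYdh)]
      exact T.pool
  exact ⟨insert d E, insert_subset_insert _ T.subset, hne',
    disjoint_insert_right.2 ⟨mt mem_bundle.1 hXd, T.disjoint⟩, hpool, hflow_used,
    T.flow.insert hdE hYd⟩

lemma IsTrail.bundle_Y_inter_subset (T : IsTrail X Y h (A h) U E c) (hA : ∀ g ≠ h, A₂ g = A g)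
    (hY : NonRedundant (cappedProfile b₂ A₂) Y) (g : Fin n) : bundle Y g ∩ E ⊆ A g := by
  by_cases hg : g = h
  · exact hg ▸ T.pool
  · rw [← hA g hg]
    exact inter_subset_left.trans (nonRedundant_cappedProfile_iff.1 hY g).1

lemma IsTrail.bundle_X_inter_subset (T : IsTrail X Y h (A h) U E c) (hA : ∀ g ≠ h, A₂ g = A g)
    (hX : NonRedundant (cappedProfile b A) X) (g : Fin n) : bundle X g ∩ E ⊆ A₂ g := by
  by_cases hg : g = h
  · rw [hg, disjoint_iff_inter_eq_empty.1 T.disjoint]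
    exact empty_subset _
  · rw [hA g hg]
    exact inter_subset_left.trans (nonRedundant_cappedProfile_iff.1 hX g).1

lemma IsTrail.false_of_none (T : IsTrail X Y h (A h) U E none) (hA : ∀ g ≠ h, A₂ g = A g)
    (hX : IsHWSDOpt (cappedProfile b A) P X) (hY : NonRedundant (cappedProfile b₂ A₂) Y)
    (hroom : #(bundle X h) < b h) : False := by
  have hZ := T.flow.nonRedundant_piecewise hX.1 (T.bundle_Y_inter_subset hA hY)
    (by rintro g ⟨⟩; exact hroom)
  have hsum := T.flow.sum_card_piecewise
  have hle := hX.usw_le hZ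
  simp only [reduceCtorEq, if_false, sum_const_zero, Option.some.injEq, sum_ite_eq, mem_univ,
    if_true] at hsum
  rw [hZ.usw_eq, hX.1.usw_eq] at hle
  omega

lemma IsTrail.le_card_bundle [∀ d, Std.Asymm (P d)] {c : Fin n}
    (T : IsTrail X Y h (A h) U E (some c)) (hch : c ≠ h) (hb : ∀ g ≠ h, b₂ g = b g)
    (hA : ∀ g ≠ h, A₂ g = A g) (hX : IsHWSDOpt (cappedProfile b A) P X)
    (hY : IsHWSDOpt (cappedProfile b₂ A₂) P Y) (hroom : #(bundle X h) < b h) :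
    b c ≤ #(bundle Y c) := by
  by_contra! hfull
  have hE : (bundle Y h ∩ E).Nonempty := by
    have := T.flow h
    rw [if_neg (by simpa using hch), if_pos rfl] at this
    exact card_pos.1 (by omega)
  obtain ⟨d, hd⟩ := hE
  have hZ := T.flow.nonRedundant_piecewise hX.1 (T.bundle_Y_inter_subset hA hY.1)
    (by rintro g ⟨⟩; exact hroom)
  have hW := T.flow.symm.nonRedundant_piecewise hY.1 (T.bundle_X_inter_subset hA hX.1)
    (by intro g hg; obtain rfl := Option.some.inj hg; rwa [hb _ hch])
  have hsumZ := T.flow.sum_card_piecewise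
  have hsumW := T.flow.symm.sum_card_piecewise
  simp only [Option.some.injEq, sum_ite_eq, mem_univ, if_true] at hsumZ hsumW
  refine hX.false_of_exchange hY ⟨d, (mem_inter.1 hd).2, T.ne d (T.subset (mem_inter.1 hd).2)⟩
    hZ hW ?_ ?_
  · rw [hZ.usw_eq, hX.1.usw_eq]
    omega
  · rw [hW.usw_eq, hY.1.usw_eq]
    omega

lemma IsTrail.exists_fresh [∀ d, Std.Asymm (P d)] {c : Fin n}
    (T : IsTrail X Y h (A h) U E (some c)) (hb : ∀ g ≠ h, b₂ g = b g)
    (hA : ∀ g ≠ h, A₂ g = A g) (hX : IsHWSDOpt (cappedProfile b A) P X)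
    (hY : IsHWSDOpt (cappedProfile b₂ A₂) P Y) (hroom : #(bundle X h) < b h)
    (hpool : #(bundle X h \ bundle Y h) < #((bundle Y h ∩ A h) \ bundle X h)) :
    ∃ d ∉ U, Y d = some c ∧ X d ≠ Y d ∧ (c = h → d ∈ A h) := by
  suffices ∃ S ⊆ bundle Y c \ bundle X c, (c = h → S ⊆ A h) ∧ #(bundle Y c ∩ U) < #S by
    obtain ⟨S, hSYX, hSA, hlt⟩ := this
    obtain ⟨d, hdS, hdU⟩ := exists_mem_notMem_of_card_inter_lt (hSYX.trans sdiff_subset) hlt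
    obtain ⟨hdY, hdX⟩ := mem_sdiff.1 (hSYX hdS)
    exact ⟨d, hdU, mem_bundle.1 hdY, fun he => hdX (mem_bundle.2 (he.trans (mem_bundle.1 hdY))),
      fun hc => hSA hc hdS⟩
  have hU := T.flow_used c
  have hXU := card_bundle_inter_le_card_sdiff T.ne c
  by_cases hch : c = h
  · subst hch
    simp only [↓reduceIte, Nat.add_right_cancel_iff] at hU
    exact ⟨(bundle Y c ∩ A c) \ bundle X c, sdiff_subset_sdiff inter_subset_left subset_rfl,
      fun _ => sdiff_subset.trans inter_subset_right, by omega⟩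
  · simp only [↓reduceIte, Option.some.injEq, Ne.symm hch, add_zero] at hU
    have hfull := T.le_card_bundle hch hb hA hX hY hroom
    have hXc := (nonRedundant_cappedProfile_iff.1 hX.1 c).2
    have hsdiff := card_sdiff_le_card_sdiff_iff.2 (hXc.trans hfull)
    exact ⟨bundle Y c \ bundle X c, subset_rfl, fun hc => absurd hc hch, by omega⟩

theorem cappedProfile_le_of_isHWSDOpt [∀ d, Std.Asymm (P d)] (hb : ∀ g ≠ h, b₂ g = b g)
    (hA : ∀ g ≠ h, A₂ g = A g) (hX : IsHWSDOpt (cappedProfile b A) P X)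
    (hY : IsHWSDOpt (cappedProfile b₂ A₂) P Y) :
    cappedProfile b A h (bundle Y h) ≤ cappedProfile b A h (bundle X h) := by
  rw [hX.1 h, cappedProfile]
  by_contra! hgain
  have hroom : #(bundle X h) < b h := by omega
  have hpool : #(bundle X h \ bundle Y h) < #((bundle Y h ∩ A h) \ bundle X h) := by
    have h1 := card_sdiff_add_card_inter (bundle X h) (bundle Y h)
    have h2 := card_sdiff_add_card_inter (bundle Y h ∩ A h) (bundle X h)
    have h3 : #(bundle Y h ∩ A h ∩ bundle X h) ≤ #(bundle X h ∩ bundle Y h) :=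
      card_le_card fun d hd => by simp_all
    omega
  obtain ⟨U, ⟨E, c, T⟩, hmax⟩ := Set.Finite.exists_maximal
    (s := {U | ∃ E c, IsTrail X Y h (A h) U E (some c)}) (Set.toFinite _)
    ⟨∅, ∅, h, isTrail_empty⟩
  obtain ⟨d, hdU, hYd, hne, hdA⟩ := T.exists_fresh hb hA hX hY hroom hpool
  obtain ⟨E', T'⟩ := T.extend hdU hYd hne hdA
  cases hXd : X d with
  | none => exact (hXd ▸ T').false_of_none hA hX hY.1 hroom
  | some c' => exact hdU (hmax ⟨E', c', hXd ▸ T'⟩ (subset_insert d U) (mem_insert_self d U))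

end Trails

/-- Corollary 3.6: the HWSD mechanism is (exactly) hospital-strategyproof when
hospitals have binary capped additive valuations. -/
theorem hwsd_hospital_sp_capped_additive {n m : ℕ} (v : Fin n → Finset (Fin m) → ℤ)
    (P : Fin m → Fin n → Fin n → Prop)
    (hv : ∀ h, IsBinaryCappedAdditive (v h)) (hP : ∀ d, IsStrictTotalOrder (Fin n) (P d))
    (h : Fin n) (v' : Finset (Fin m) → ℤ) (hv' : IsBinaryCappedAdditive v')
    (X Y : Fin m → Option (Fin n))
    (hX : IsHWSDOpt v P X) (hY : IsHWSDOpt (Function.update v h v') P Y) :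
    v h (bundle Y h) ≤ v h (bundle X h) := by
  choose b A hbA using fun g => (hv g).exists_eq_min_card_inter
  obtain ⟨b', A', hbA'⟩ := hv'.exists_eq_min_card_inter
  have hv_eq : v = cappedProfile b A := funext fun g => funext (hbA g)
  have hv'_eq : Function.update v h v' =
      cappedProfile (Function.update b h b') (Function.update A h A') := by
    funext g S
    by_cases hg : g = h
    · subst hg
      simp [cappedProfile, hbA']
    · simp [cappedProfile, hg, hbA]
  have : ∀ d, Std.Asymm (P d) := fun d => have := hP d; inferInstance
  rw [hv'_eq] at hY
  subst hv_eq
  exact cappedProfile_le_of_isHWSDOpt (fun g hg => Function.update_of_ne hg _ _)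
    (fun g hg => Function.update_of_ne hg _ _) hX hY
end

section
/- The allocation X output by the serial dictatorship (SD) mechanism is a 2-approximation to the maximum hospital utilitarian welfare: 2·USW(X) ≥ USW(Y) for every allocation Y. -/
open Finset

/-- The doctors (strictly) before `i` assigned to hospital `h` under `X`:
the partial bundle of `h` at the start of doctor `i`'s turn in serial dictatorship. -/
def bundleBefore {n m : ℕ} (X : Fin m → Option (Fin n)) (h : Fin n) (i : Fin m) :
    Finset (Fin m) :=
  Finset.univ.filter (fun d => X d = some h ∧ d < i)

/-- `X` is the output of the serial dictatorship mechanism: processing doctors in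
order, each doctor `i` is assigned to the first hospital (in `i`'s reported
preference order `P i`) whose marginal gain for `i`, given its current partial
bundle, is `1`; `i` stays unallocated if no such hospital exists. -/
def IsSDOutput {n m : ℕ} (v : Fin n → Finset (Fin m) → ℤ)
    (P : Fin m → Fin n → Fin n → Prop) (X : Fin m → Option (Fin n)) : Prop :=
  ∀ i : Fin m,
    (∀ h, X i = some h →
      (v h (insert i (bundleBefore X h i)) - v h (bundleBefore X h i) = 1 ∧
       ∀ h', P i h' h →
         v h' (insert i (bundleBefore X h' i)) - v h' (bundleBefore X h' i) = 0)) ∧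
    (X i = none → ∀ h,
      v h (insert i (bundleBefore X h i)) - v h (bundleBefore X h i) = 0)

/-! SD assigns a doctor only when its marginal gain is 1 on top of the earlier doctors of that
hospital, and by submodularity this gain survives on every subset of them; hence `X` is
non-redundant and `USW X` is the number of allocated doctors. A doctor that SD leaves unallocated
had gain 0 everywhere at its turn, and by submodularity also on top of the final bundles. So for any
`Y`, `v h (Y_h) ≤ v h (X_h) + #(Y_h ∩ allocated X)`, and summing over `h` gives
`USW Y ≤ USW X + #(allocated X) = 2 USW X`. -/

namespace IsMRF

variable {α : Type*} [DecidableEq α] {v : Finset α → ℤ}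

theorem le_insert (hv : IsMRF v) (S : Finset α) (d : α) : v S ≤ v (insert d S) := by
  by_cases hd : d ∈ S
  · rw [insert_eq_of_mem hd]
  · rcases hv.2.1 S d hd with h | h <;> linarith

theorem insert_le_add_one (hv : IsMRF v) (S : Finset α) (d : α) :
    v (insert d S) ≤ v S + 1 := by
  by_cases hd : d ∈ S
  · rw [insert_eq_of_mem hd]; linarith
  · rcases hv.2.1 S d hd with h | h <;> linarith

theorem mono (hv : IsMRF v) {S T : Finset α} (hST : S ⊆ T) : v S ≤ v T := by
  rw [← union_sdiff_of_subset hST]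
  induction T \ S using Finset.induction_on with
  | empty => simp
  | insert d C _ ih => exact ih.trans (by rw [union_insert]; exact hv.le_insert _ d)

theorem union_le_add_card (hv : IsMRF v) (S C : Finset α) : v (S ∪ C) ≤ v S + #C := by
  induction C using Finset.induction_on with
  | empty => simp
  | insert d C hd ih =>
    rw [union_insert, card_insert_of_notMem hd]
    have := hv.insert_le_add_one (S ∪ C) d
    push_cast
    linarith

theorem insert_eq_of_subset (hv : IsMRF v) {S T : Finset α} {d : α} (hST : S ⊆ T)
    (h0 : v (insert d S) = v S) : v (insert d T) = v T := by
  by_cases hd : d ∈ T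
  · rw [insert_eq_of_mem hd]
  · have := hv.2.2 S T d hST hd
    have := hv.le_insert T d
    linarith

theorem insert_eq_add_one_of_subset (hv : IsMRF v) {S T : Finset α} {d : α} (hST : S ⊆ T)
    (h1 : v (insert d T) = v T + 1) : v (insert d S) = v S + 1 := by
  by_cases hd : d ∈ T
  · rw [insert_eq_of_mem hd] at h1; linarith
  · have := hv.2.2 S T d hST hd
    have := hv.insert_le_add_one S d
    linarith

theorem union_eq_of_forall_exists_subset (hv : IsMRF v) {T U : Finset α}
    (hU : ∀ d ∈ U, ∃ S ⊆ T, v (insert d S) = v S) : v (T ∪ U) = v T := by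
  induction U using Finset.induction_on with
  | empty => simp
  | insert d U _ ih =>
    obtain ⟨S, hST, h0⟩ := hU d (mem_insert_self d U)
    rw [union_insert, hv.insert_eq_of_subset (hST.trans subset_union_left) h0]
    exact ih fun d' hd' => hU d' (mem_insert_of_mem hd')

end IsMRF

section SerialDictatorship

variable {n m : ℕ}

def allocated (X : Fin m → Option (Fin n)) : Finset (Fin m) := {d | X d ≠ none}

theorem sum_card_bundle_inter (Z : Fin m → Option (Fin n)) (s : Finset (Fin m)) :
    ∑ h, #(bundle Z h ∩ s) = #(allocated Z ∩ s) := by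
  rw [card_eq_sum_card_fiberwise (f := Z) (t := univ) (fun _ _ => mem_coe.2 (mem_univ _)),
    Fintype.sum_option]
  have hnone : {d ∈ allocated Z ∩ s | Z d = none} = ∅ :=
    filter_false_of_mem fun d hd => by simpa [allocated] using (mem_inter.1 hd).1
  rw [hnone, card_empty, zero_add]
  refine sum_congr rfl fun h _ => congrArg card ?_
  ext d
  simp only [allocated, bundle, mem_inter, mem_filter, mem_univ, true_and]
  grind

theorem bundleBefore_subset_bundle (X : Fin m → Option (Fin n)) (h : Fin n) (i : Fin m) :
    bundleBefore X h i ⊆ bundle X h :=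
  fun d hd => by simp_all [bundleBefore, bundle]

variable {v : Fin n → Finset (Fin m) → ℤ} {P : Fin m → Fin n → Fin n → Prop}
  {X : Fin m → Option (Fin n)}

theorem IsSDOutput.nonRedundant (hv : ∀ h, IsMRF (v h)) (hX : IsSDOutput v P X) :
    NonRedundant v X := by
  intro h
  suffices ∀ S ⊆ bundle X h, v h S = #S from this _ subset_rfl
  intro S
  induction S using Finset.induction_on_max with
  | empty => simp [(hv h).1]
  | insert i S hlt ih =>
    intro hS
    have hi : X i = some h := by simpa [bundle] using hS (mem_insert_self i S)
    have hSi : S ⊆ bundleBefore X h i := fun d hd =>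
      mem_filter.2 ⟨mem_univ d, (mem_filter.1 (hS (mem_insert_of_mem hd))).2, hlt d hd⟩
    have hgain := ((hX i).1 h hi).1
    rw [(hv h).insert_eq_add_one_of_subset hSi (by linarith),
      card_insert_of_notMem fun hiS => lt_irrefl i (hlt i hiS), ih ((subset_insert i S).trans hS)]
    push_cast; ring

theorem IsSDOutput.le_add_card_inter_allocated (hv : ∀ h, IsMRF (v h)) (hX : IsSDOutput v P X) (h : Fin n)
    (S : Finset (Fin m)) : v h S ≤ v h (bundle X h) + #(S ∩ allocated X) := by
  set A := allocated X
  -- an unallocated doctor had zero marginal gain for `h` on top of its predecessors in `bundle X h`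
  have hUnalloc : v h (bundle X h ∪ S ∩ A ∪ S \ A) = v h (bundle X h ∪ S ∩ A) := by
    refine (hv h).union_eq_of_forall_exists_subset fun d hd => ?_
    have hgain := (hX d).2 (by simpa [A, allocated] using (mem_sdiff.1 hd).2) h
    exact ⟨bundleBefore X h d, (bundleBefore_subset_bundle X h d).trans subset_union_left,
      by linarith⟩
  calc v h S ≤ v h (bundle X h ∪ S ∩ A ∪ S \ A) :=
        (hv h).mono fun d hd => by by_cases hdA : d ∈ A <;> simp [hd, hdA]
    _ ≤ v h (bundle X h) + #(S ∩ A) := by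
        rw [hUnalloc]; exact (hv h).union_le_add_card _ _

end SerialDictatorship

theorem sd_two_approx_usw_general {n m : ℕ} (v : Fin n → Finset (Fin m) → ℤ)
    (P : Fin m → Fin n → Fin n → Prop)
    (hv : ∀ h, IsMRF (v h))
    (X : Fin m → Option (Fin n)) (hX : IsSDOutput v P X) :
    ∀ Y : Fin m → Option (Fin n), USW v Y ≤ 2 * USW v X := by
  intro Y
  set A := allocated X
  have hXA : USW v X = #A := by
    rw [USW, sum_congr rfl fun h _ => hX.nonRedundant hv h]
    simpa using congrArg (Nat.cast (R := ℤ)) (sum_card_bundle_inter X univ)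
  have hYA : ∑ h, #(bundle Y h ∩ A) ≤ #A :=
    (sum_card_bundle_inter Y A).trans_le (card_le_card inter_subset_right)
  calc USW v Y ≤ ∑ h, (v h (bundle X h) + #(bundle Y h ∩ A)) :=
        sum_le_sum fun h _ => hX.le_add_card_inter_allocated hv h (bundle Y h)
    _ = USW v X + ∑ h, #(bundle Y h ∩ A) := by rw [sum_add_distrib, USW, Nat.cast_sum]
    _ ≤ 2 * USW v X := by rw [two_mul, hXA]; exact_mod_cast add_le_add_right hYA _

/-- The serial dictatorship output is a 2-approximation to the maximum hospital
utilitarian welfare. -/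
theorem sd_two_approx_usw {n m : ℕ} (v : Fin n → Finset (Fin m) → ℤ)
    (P : Fin m → Fin n → Fin n → Prop)
    (hv : ∀ h, IsMRF (v h)) (hP : ∀ d, IsStrictTotalOrder (Fin n) (P d))
    (X : Fin m → Option (Fin n)) (hX : IsSDOutput v P X) :
    ∀ Y : Fin m → Option (Fin n), USW v Y ≤ 2 * USW v X :=
  sd_two_approx_usw_general v P hv X hX
end
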